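/- Let α, β > 0 with αβ > 1, set γ = √(α/β) and δ = arccoth(αβ). For f ∈ L¹(ℝ) (complex-valued) define g(t) = e^{−t²/(2α²)}·(β/√(2π cosh δ))·∫_ℝ exp(−(β²/2)·(t/cosh δ − t′)²)·f(t′) dt′. Then g ∈ L¹(ℝ) and for all ω ∈ ℝ, (1/√(2π))·∫_ℝ e^{−itω}·g(t) dt = e^{−ω²/(2β²)}·(α/√(2π cosh δ))·∫_ℝ exp(−(α²/2)·(ω/cosh δ − ω′)²)·f̂(ω′) dω′, where f̂(ω) = (1/√(2π))·∫_ℝ e^{−itω}·f(t) dt. -/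

import Mathlib

open Real MeasureTheory Complex

/-!
After Fubini, both sides become
`(2π cosh δ)^{-1/2} ∫ e^{-ω²/(2β²) - iωx/cosh δ - x²/(2α²)} f(x) dx`.
On the left the inner `t`-integral is a Gaussian integral: `coth δ = αβ` is equivalent to
`1/α² + β²/cosh² δ = β²`, which makes the coefficient of `t²` in its exponent exactly `β²/2`
and then also cancels the `t'²` terms of the result. On the right the inner `ω'`-integral is
the Fourier transform of a Gaussian centred at `ω / cosh δ`.
-/

section KernelFubini

variable {X Y 𝕜 : Type*} [MeasurableSpace X] [MeasurableSpace Y] {μ : Measure X} {ν : Measure Y}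
  [RCLike 𝕜] {k : X → Y → 𝕜} {φ : X → ℝ} {f : Y → 𝕜}

theorem integrable_prod_kernel_mul (hk : AEStronglyMeasurable (Function.uncurry k) (μ.prod ν))
    (hφ : Integrable φ μ) (hkφ : ∀ x y, ‖k x y‖ ≤ φ x) (hf : Integrable f ν) :
    Integrable (fun p : X × Y => k p.1 p.2 * f p.2) (μ.prod ν) :=
  (hφ.mul_prod hf.norm).mono' (hk.mul hf.1.comp_snd) <| .of_forall fun _ =>
    (norm_mul_le _ _).trans (mul_le_mul_of_nonneg_right (hkφ _ _) (norm_nonneg _))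

theorem integrable_integral_kernel_mul [SFinite ν]
    (hk : AEStronglyMeasurable (Function.uncurry k) (μ.prod ν))
    (hφ : Integrable φ μ) (hkφ : ∀ x y, ‖k x y‖ ≤ φ x) (hf : Integrable f ν) :
    Integrable (fun x => ∫ y, k x y * f y ∂ν) μ :=
  (integrable_prod_kernel_mul hk hφ hkφ hf).integral_prod_left

theorem integral_integral_kernel_mul_swap [SFinite μ] [SFinite ν]
    (hk : AEStronglyMeasurable (Function.uncurry k) (μ.prod ν))
    (hφ : Integrable φ μ) (hkφ : ∀ x y, ‖k x y‖ ≤ φ x) (hf : Integrable f ν) :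
    ∫ x, ∫ y, k x y * f y ∂ν ∂μ = ∫ y, (∫ x, k x y ∂μ) * f y ∂ν := by
  rw [integral_integral_swap (f := fun x y => k x y * f y)
    (integrable_prod_kernel_mul hk hφ hkφ hf)]
  simp_rw [integral_mul_const]

end KernelFubini

theorem integral_cexp_neg_mul_sq_add_mul_add {b : ℝ} (hb : 0 < b) (c d : ℂ) :
    ∫ x : ℝ, cexp (-b * x ^ 2 + c * x + d) = √(π / b) * cexp (d + c ^ 2 / (4 * b)) := by
  rw [integral_cexp_quadratic (by simpa using hb), neg_neg, ← ofReal_div,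
    show (1 / 2 : ℂ) = ((1 / 2 : ℝ) : ℂ) by norm_num, ← ofReal_cpow (by positivity),
    ← sqrt_eq_rpow, mul_neg, div_neg, sub_neg_eq_add]

theorem sqrt_pi_div_sq_div_two {a : ℝ} (ha : 0 < a) : √(π / (a ^ 2 / 2)) = √(2 * π) / a := by
  rw [div_div_eq_mul_div, mul_comm, sqrt_div' _ (by positivity), sqrt_sq ha.le]

theorem integrable_exp_neg_sq_div {a : ℝ} (ha : a ≠ 0) :
    Integrable fun t : ℝ => rexp (-(t ^ 2) / (2 * a ^ 2)) := by
  simpa [neg_div, div_eq_inv_mul] using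
    integrable_exp_neg_mul_sq (show 0 < (2 * a ^ 2)⁻¹ by positivity)

theorem one_div_sq_add_sq_div_cosh_sq_eq_sq {α β δ : ℝ} (hαβ : α * β ≠ 0)
    (hcoth : Real.cosh δ / Real.sinh δ = α * β) : 1 / α ^ 2 + β ^ 2 / Real.cosh δ ^ 2 = β ^ 2 := by
  have hsinh : Real.sinh δ ≠ 0 := fun h => hαβ (by rw [← hcoth, h, div_zero])
  have hα : α ≠ 0 := left_ne_zero_of_mul hαβ
  rw [div_eq_iff hsinh] at hcoth
  field_simp
  linear_combination (Real.cosh δ + α * β * Real.sinh δ) * hcoth -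
    α ^ 2 * β ^ 2 * Real.cosh_sq_sub_sinh_sq δ

theorem integral_gaussian_mul_cexp {a : ℝ} (ha : 0 < a) (ν t : ℝ) :
    ∫ ω : ℝ, (rexp (-(a ^ 2 / 2) * (ν - ω) ^ 2) : ℂ) * cexp (-I * t * ω) =
      (√(2 * π) / a : ℝ) * (cexp (-I * t * ν) * rexp (-(t ^ 2) / (2 * a ^ 2))) := by
  have hquad : ∀ ω : ℝ, (rexp (-(a ^ 2 / 2) * (ν - ω) ^ 2) : ℂ) * cexp (-I * t * ω) =
      cexp (-((a ^ 2 / 2 : ℝ) : ℂ) * ω ^ 2 + (a ^ 2 * ν - I * t) * ω + -(a ^ 2 / 2 * ν ^ 2)) := by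
    intro ω
    rw [ofReal_exp, ← Complex.exp_add]
    push_cast
    ring_nf
  simp_rw [hquad, integral_cexp_neg_mul_sq_add_mul_add (by positivity : 0 < a ^ 2 / 2),
    sqrt_pi_div_sq_div_two ha, ofReal_exp, ← Complex.exp_add]
  congr 2
  have ha' : (a : ℂ) ≠ 0 := by exact_mod_cast ha.ne'
  push_cast
  field_simp
  linear_combination (4 * t ^ 2) * I_sq

theorem integral_cexp_mul_gaussian_mul_gaussian {α β C : ℝ} (hβ : 0 < β)
    (hrel : 1 / α ^ 2 + β ^ 2 / C ^ 2 = β ^ 2) (ω s : ℝ) :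
    ∫ t : ℝ, cexp (-I * t * ω) * rexp (-(t ^ 2) / (2 * α ^ 2)) *
        rexp (-(β ^ 2 / 2) * (t / C - s) ^ 2) =
      (√(2 * π) / β * rexp (-(ω ^ 2) / (2 * β ^ 2)) : ℝ) *
        (cexp (-I * s * (ω / C : ℝ)) * rexp (-(s ^ 2) / (2 * α ^ 2))) := by
  have hrelC : 1 / (α : ℂ) ^ 2 + (β : ℂ) ^ 2 / (C : ℂ) ^ 2 = (β : ℂ) ^ 2 := by
    exact_mod_cast congrArg ((↑) : ℝ → ℂ) hrel
  have hquad : ∀ t : ℝ, cexp (-I * t * ω) * rexp (-(t ^ 2) / (2 * α ^ 2)) *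
      rexp (-(β ^ 2 / 2) * (t / C - s) ^ 2) =
      cexp (-((β ^ 2 / 2 : ℝ) : ℂ) * t ^ 2 + (β ^ 2 * s / C - I * ω) * t +
        -(β ^ 2 / 2 * s ^ 2)) := by
    intro t
    rw [ofReal_exp, ofReal_exp, ← Complex.exp_add, ← Complex.exp_add]
    congr 1
    push_cast
    linear_combination (-(t : ℂ) ^ 2 / 2) * hrelC
  have hβ' : (β : ℂ) ≠ 0 := by exact_mod_cast hβ.ne'
  simp_rw [hquad, integral_cexp_neg_mul_sq_add_mul_add (by positivity : 0 < β ^ 2 / 2),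
    sqrt_pi_div_sq_div_two hβ]
  rw [ofReal_mul, mul_assoc, ofReal_exp, ofReal_exp, ← Complex.exp_add, ← Complex.exp_add]
  congr 2
  push_cast
  field_simp
  linear_combination (4 * β ^ 2 * s ^ 2) * hrelC + 4 * ω ^ 2 * I_sq

theorem norm_gaussian_mul_gaussian_le (α β C t s : ℝ) :
    ‖(rexp (-(t ^ 2) / (2 * α ^ 2)) : ℂ) * rexp (-(β ^ 2 / 2) * (t / C - s) ^ 2)‖ ≤
      rexp (-(t ^ 2) / (2 * α ^ 2)) := by
  rw [norm_mul, norm_real, norm_real, norm_of_nonneg (exp_nonneg _),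
    norm_of_nonneg (exp_nonneg _)]
  refine mul_le_of_le_one_right (exp_nonneg _) (exp_le_one_iff.2 ?_)
  nlinarith [sq_nonneg β, sq_nonneg (t / C - s)]

theorem integrable_gaussian_filter {α : ℝ} (hα : α ≠ 0) (β C : ℝ) {f : ℝ → ℂ}
    (hf : Integrable f) :
    Integrable fun t : ℝ => (rexp (-(t ^ 2) / (2 * α ^ 2)) : ℂ) *
      ∫ t', (rexp (-(β ^ 2 / 2) * (t / C - t') ^ 2) : ℂ) * f t' := by
  simp_rw [← integral_const_mul, ← mul_assoc]
  exact integrable_integral_kernel_mul (Continuous.aestronglyMeasurable (by fun_prop))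
    (integrable_exp_neg_sq_div hα) (norm_gaussian_mul_gaussian_le α β C) hf

theorem norm_cexp_neg_I_mul (t ω : ℝ) : ‖cexp (-I * t * ω)‖ = 1 := by
  rw [show -I * t * ω = ((-(t * ω) : ℝ) : ℂ) * I by push_cast; ring, norm_exp_ofReal_mul_I]

theorem integral_cexp_mul_gaussian_filter {α β C : ℝ} (hα : α ≠ 0) (hβ : 0 < β)
    (hrel : 1 / α ^ 2 + β ^ 2 / C ^ 2 = β ^ 2) {f : ℝ → ℂ} (hf : Integrable f) (ω : ℝ) :
    ∫ t : ℝ, cexp (-I * t * ω) * ((rexp (-(t ^ 2) / (2 * α ^ 2)) : ℂ) *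
        ∫ t', (rexp (-(β ^ 2 / 2) * (t / C - t') ^ 2) : ℂ) * f t') =
      (√(2 * π) / β * rexp (-(ω ^ 2) / (2 * β ^ 2)) : ℝ) *
        ∫ x : ℝ, cexp (-I * x * (ω / C : ℝ)) * (rexp (-(x ^ 2) / (2 * α ^ 2)) * f x) := by
  calc _ = ∫ t : ℝ, ∫ t', cexp (-I * t * ω) * rexp (-(t ^ 2) / (2 * α ^ 2)) *
          rexp (-(β ^ 2 / 2) * (t / C - t') ^ 2) * f t' := by
        simp_rw [← integral_const_mul, ← mul_assoc]
    _ = ∫ t', (∫ t : ℝ, cexp (-I * t * ω) * rexp (-(t ^ 2) / (2 * α ^ 2)) *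
          rexp (-(β ^ 2 / 2) * (t / C - t') ^ 2)) * f t' := by
      refine integral_integral_kernel_mul_swap (Continuous.aestronglyMeasurable (by fun_prop))
        (integrable_exp_neg_sq_div hα) (fun t s => ?_) hf
      rw [mul_assoc, norm_mul, norm_cexp_neg_I_mul, one_mul]
      exact norm_gaussian_mul_gaussian_le α β C t s
    _ = _ := by
      simp_rw [integral_cexp_mul_gaussian_mul_gaussian hβ hrel, mul_assoc, integral_const_mul]

theorem integral_gaussian_mul_fourier {a : ℝ} (ha : 0 < a) {f : ℝ → ℂ} (hf : Integrable f)
    (ν : ℝ) :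
    ∫ ω : ℝ, (rexp (-(a ^ 2 / 2) * (ν - ω) ^ 2) : ℂ) * ∫ t : ℝ, cexp (-I * t * ω) * f t =
      (√(2 * π) / a : ℝ) * ∫ x : ℝ, cexp (-I * x * ν) * (rexp (-(x ^ 2) / (2 * a ^ 2)) * f x) := by
  calc _ = ∫ ω : ℝ, ∫ t : ℝ, rexp (-(a ^ 2 / 2) * (ν - ω) ^ 2) * cexp (-I * t * ω) * f t := by
        simp_rw [← integral_const_mul, ← mul_assoc]
    _ = ∫ t : ℝ, (∫ ω : ℝ, rexp (-(a ^ 2 / 2) * (ν - ω) ^ 2) * cexp (-I * t * ω)) * f t := by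
      refine integral_integral_kernel_mul_swap (Continuous.aestronglyMeasurable (by fun_prop))
        ((integrable_exp_neg_mul_sq (by positivity : 0 < a ^ 2 / 2)).comp_sub_left ν)
        (fun ω t => ?_) hf
      rw [norm_mul, norm_cexp_neg_I_mul, mul_one, norm_real, norm_of_nonneg (exp_nonneg _)]
    _ = _ := by simp_rw [integral_gaussian_mul_cexp ha, mul_assoc, integral_const_mul]

theorem filter_output_fourier_transform
    (α β : ℝ) (hα : 0 < α) (hβ : 0 < β)
    (δ : ℝ) (hcoth : Real.cosh δ / Real.sinh δ = α * β)
    (f : ℝ → ℂ) (hf : MeasureTheory.Integrable f)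
    (g : ℝ → ℂ)
    (hg : ∀ t : ℝ, g t =
      ((Real.exp (-(t ^ 2) / (2 * α ^ 2)) * (β / Real.sqrt (2 * π * Real.cosh δ)) : ℝ) : ℂ) *
        ∫ t' : ℝ, ((Real.exp (-(β ^ 2 / 2) * (t / Real.cosh δ - t') ^ 2) : ℝ) : ℂ) * f t') :
    MeasureTheory.Integrable g ∧
    ∀ ω : ℝ,
      ((1 / Real.sqrt (2 * π) : ℝ) : ℂ) *
          ∫ t : ℝ, Complex.exp (-Complex.I * (t : ℂ) * (ω : ℂ)) * g t =
        ((Real.exp (-(ω ^ 2) / (2 * β ^ 2)) * (α / Real.sqrt (2 * π * Real.cosh δ)) : ℝ) : ℂ) *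
          ∫ ω' : ℝ, ((Real.exp (-(α ^ 2 / 2) * (ω / Real.cosh δ - ω') ^ 2) : ℝ) : ℂ) *
            (((1 / Real.sqrt (2 * π) : ℝ) : ℂ) *
              ∫ t : ℝ, Complex.exp (-Complex.I * (t : ℂ) * (ω' : ℂ)) * f t) := by
  have hrel := one_div_sq_add_sq_div_cosh_sq_eq_sq (mul_ne_zero hα.ne' hβ.ne') hcoth
  set C := Real.cosh δ
  set S := √(2 * π * C)
  have hg' : g = fun t => ((β / S : ℝ) : ℂ) * ((rexp (-(t ^ 2) / (2 * α ^ 2)) : ℂ) *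
      ∫ t', (rexp (-(β ^ 2 / 2) * (t / C - t') ^ 2) : ℂ) * f t') := by
    funext t
    rw [hg, ofReal_mul]
    ring
  refine ⟨hg' ▸ (integrable_gaussian_filter hα.ne' β C hf).const_mul _, fun ω => ?_⟩
  simp_rw [hg', mul_left_comm _ ((β / S : ℝ) : ℂ), mul_left_comm _ ((1 / √(2 * π) : ℝ) : ℂ),
    integral_const_mul, integral_cexp_mul_gaussian_filter hα.ne' hβ hrel hf,
    integral_gaussian_mul_fourier hα hf, ← mul_assoc, ← ofReal_mul]
  congr 2
  have : √(2 * π) ≠ 0 := by positivity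
  field_simp
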